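/- For each m ≥ 1, the following identity of formal power series in q holds: (1/(q;q)_∞) * Σ_{l=0}^{m-1} (-1)^l q^{l(3l-1)/2} (1 - q^{4l+2}) = 1 + (-1)^{m-1} Σ_{d=1}^∞ q^{d²+binomial(m,2)} / (q;q)_{2d} * (1-q^m)/(1-q^d) * qbinom(2d, d+m). -/

import Mathlib

open Finset

/-- `(q;q)_n = ∏_{i=1}^n (1 - q^i)` as a formal power series over `ℚ`. -/
noncomputable def qp (n : ℕ) : PowerSeries ℚ :=
  ∏ i ∈ Finset.range n, (1 - (PowerSeries.X : PowerSeries ℚ) ^ (i + 1))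

/-- The Gaussian binomial coefficient `qbinom(n,k)`. -/
noncomputable def qbin (n k : ℕ) : PowerSeries ℚ :=
  if k ≤ n then qp n * (qp k * qp (n - k))⁻¹ else 0

/-- `(q;q)_∞ = ∏_{i=1}^∞ (1 - q^i)`, defined coefficientwise: its `n`-th coefficient
agrees with that of `(q;q)_n`, since the omitted factors are `1 + O(q^{n+1})`. -/
noncomputable def qpInf : PowerSeries ℚ :=
  PowerSeries.mk fun n => PowerSeries.coeff n (qp n)

/-- The sum `Σ_{d=0}^∞ f d` of a sequence of power series in which the order of
`f d` tends to infinity (indeed `f d = O(q^d)` in our applications), defined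
coefficientwise via truncation. -/
noncomputable def seriesSum (f : ℕ → PowerSeries ℚ) : PowerSeries ℚ :=
  PowerSeries.mk fun n => PowerSeries.coeff n (∑ d ∈ Finset.range (n + 1), f d)

/-!
Write `X_m = Σ_f q^(f(f+2m)) / ((1 - q^(f+m)) (q)_f (q)_(f+2m-1))`. Termwise algebra and the
Durfee rectangle identity `Σ_d q^(d(d+k)) / ((q)_d (q)_(d+k)) = 1/(q)_∞` (the limit `a → ∞` of
its finite form `Σ_d q^(d(d+k)) qbinom(a,d) / (q)_(d+k) = 1/(q)_(a+k)`, proved by q-Pascal) give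
`X_m + q^(3m+1) X_(m+1) = (1 + q^m)/(q)_∞`. The tails `E_m` of Euler's pentagonal series obey
`E_m + E_(m+1) = q^(m(3m-1)/2) (1 + q^m)`, so `q^(m(3m-1)/2) X_m - E_m/(q)_∞` changes sign from
`m` to `m + 1` while its order tends to infinity: it vanishes. Since `q X_1 = 1/(q)_∞ - 1`, the
case `m = 1` is the pentagonal number theorem `E_1 = 1 - (q)_∞`, and the left-hand partial sum is
`(q)_∞ + (-1)^(m-1) (q^(m(3m-1)/2) - E_(m+1))`. On the right, each summand with `d ≥ m` splits as
`q^(m(3m-1)/2)` times a Durfee term minus `q^((m+1)(3m+2)/2)` times a term of `X_(m+1)`, and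
those with `d < m` vanish or give the first Durfee term, so the sum is
`(q^(m(3m-1)/2) - E_(m+1))/(q)_∞`.
-/

open PowerSeries

local notation "q" => (PowerSeries.X : PowerSeries ℚ)

section Divisibility

theorem dvd_prod_sub_one {ι α : Type*} [CommRing α] {a : α} {s : Finset ι} {f : ι → α}
    (h : ∀ i ∈ s, a ∣ f i - 1) : a ∣ ∏ i ∈ s, f i - 1 := by
  have hf : ∀ i ∈ s, Ideal.Quotient.mk (Ideal.span {a}) (f i) = 1 := fun i hi => by
    rw [← map_one (Ideal.Quotient.mk _), Ideal.Quotient.eq, Ideal.mem_span_singleton]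
    exact h i hi
  rw [← Ideal.mem_span_singleton, ← Ideal.Quotient.eq, map_prod, map_one, prod_eq_one hf]

theorem PowerSeries.inv_sub_inv_dvd {k : Type*} [Field k] {a A B : k⟦X⟧}
    (hA : constantCoeff A ≠ 0) (hB : constantCoeff B ≠ 0) (h : a ∣ A - B) :
    a ∣ A⁻¹ - B⁻¹ := by
  have key : A⁻¹ - B⁻¹ = -(A⁻¹ * B⁻¹ * (A - B)) := by
    linear_combination B⁻¹ * PowerSeries.mul_inv_cancel A hA
      - A⁻¹ * PowerSeries.mul_inv_cancel B hB
  rw [key]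
  exact (h.mul_left _).neg_right

theorem PowerSeries.coeff_eq_of_X_pow_dvd_sub {R : Type*} [CommRing R] {N n : ℕ} {A B : R⟦X⟧}
    (h : X ^ N ∣ A - B) (hn : n < N) : coeff n A = coeff n B :=
  sub_eq_zero.mp (by rw [← map_sub]; exact X_pow_dvd_iff.mp h n hn)

theorem PowerSeries.eq_zero_of_alternating_of_X_pow_dvd {R : Type*} [CommRing R]
    {D : ℕ → R⟦X⟧} (hrec : ∀ b, D (b + 1) = -D b) (hdvd : ∀ b, X ^ b ∣ D b) (b : ℕ) :
    D b = 0 := by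
  have hshift : ∀ M, D b = (-1) ^ M * D (b + M) := by
    intro M
    induction M with
    | zero => simp
    | succ M ih => rw [ih, ← add_assoc, hrec, pow_succ]; ring
  ext n
  have hdiv : (X : R⟦X⟧) ^ (n + 1) ∣ D b := by
    rw [hshift (n + 1)]
    exact ((pow_dvd_pow X (by omega)).trans (hdvd (b + (n + 1)))).mul_left _
  simpa using X_pow_dvd_iff.mp hdiv n (lt_add_one n)

end Divisibility

section QPochhammer

theorem constantCoeff_one_sub_X_pow {j : ℕ} (hj : j ≠ 0) : constantCoeff (1 - q ^ j) = 1 := by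
  simp [hj]

theorem one_sub_X_pow_mul_inv {j : ℕ} (hj : j ≠ 0) : (1 - q ^ j) * (1 - q ^ j)⁻¹ = 1 :=
  PowerSeries.mul_inv_cancel _ (by simp [constantCoeff_one_sub_X_pow hj])

theorem qp_zero : qp 0 = 1 := by simp [qp]

theorem qp_succ (n : ℕ) : qp (n + 1) = qp n * (1 - q ^ (n + 1)) :=
  prod_range_succ _ n

theorem qp_add (n r : ℕ) : qp (n + r) = qp n * ∏ i ∈ range r, (1 - q ^ (n + i + 1)) :=
  prod_range_add _ n r

theorem constantCoeff_qp (n : ℕ) : constantCoeff (qp n) = 1 := by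
  simp [qp, map_prod]

theorem qp_mul_inv (n : ℕ) : qp n * (qp n)⁻¹ = 1 :=
  PowerSeries.mul_inv_cancel _ (by simp [constantCoeff_qp])

theorem qp_inv_mul (n : ℕ) : (qp n)⁻¹ * qp n = 1 := by
  rw [mul_comm, qp_mul_inv]

theorem qp_inv_succ (n : ℕ) : (qp (n + 1))⁻¹ = (qp n)⁻¹ * (1 - q ^ (n + 1))⁻¹ := by
  rw [qp_succ, PowerSeries.mul_inv_rev, mul_comm]

theorem qp_inv_eq_qp_succ_inv_mul (n : ℕ) :
    (qp n)⁻¹ = (qp (n + 1))⁻¹ * (1 - q ^ (n + 1)) := by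
  rw [qp_inv_succ, mul_assoc, mul_comm _ (1 - _), one_sub_X_pow_mul_inv n.succ_ne_zero,
    mul_one]

theorem X_pow_dvd_prod_one_sub_X_pow_sub_one (n r : ℕ) :
    q ^ (n + 1) ∣ ∏ i ∈ range r, (1 - q ^ (n + i + 1)) - 1 :=
  dvd_prod_sub_one fun i _ => ⟨-q ^ i, by ring⟩

theorem X_pow_dvd_qp_add_sub_qp (n r : ℕ) : q ^ (n + 1) ∣ qp (n + r) - qp n := by
  rw [qp_add, ← mul_sub_one]
  exact (X_pow_dvd_prod_one_sub_X_pow_sub_one n r).mul_left _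

theorem coeff_qp_of_le {n a : ℕ} (h : n ≤ a) : coeff n (qp a) = coeff n (qp n) := by
  obtain ⟨r, rfl⟩ := Nat.exists_eq_add_of_le h
  exact coeff_eq_of_X_pow_dvd_sub (X_pow_dvd_qp_add_sub_qp n r) (lt_add_one n)

theorem X_pow_dvd_qpInf_sub_qp (a : ℕ) : q ^ (a + 1) ∣ qpInf - qp a := by
  rw [X_pow_dvd_iff]
  intro n hn
  rw [map_sub, qpInf, coeff_mk, coeff_qp_of_le (by omega : n ≤ a), sub_self]

theorem constantCoeff_qpInf : constantCoeff qpInf = 1 := by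
  simp [← coeff_zero_eq_constantCoeff_apply, qpInf, qp_zero]

theorem qpInf_inv_mul : qpInf⁻¹ * qpInf = 1 :=
  PowerSeries.inv_mul_cancel _ (by simp [constantCoeff_qpInf])

theorem X_pow_dvd_qpInf_inv_sub_qp_inv (a : ℕ) : q ^ (a + 1) ∣ qpInf⁻¹ - (qp a)⁻¹ :=
  inv_sub_inv_dvd (by simp [constantCoeff_qpInf]) (by simp [constantCoeff_qp])
    (X_pow_dvd_qpInf_sub_qp a)

end QPochhammer

section GaussianBinomial

theorem qbin_of_lt {n k : ℕ} (h : n < k) : qbin n k = 0 := by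
  rw [qbin, if_neg h.not_ge]

theorem qbin_add_left (d r : ℕ) : qbin (d + r) d = qp (d + r) * ((qp d)⁻¹ * (qp r)⁻¹) := by
  rw [qbin, if_pos (Nat.le_add_right d r), Nat.add_sub_cancel_left, PowerSeries.mul_inv_rev,
    mul_comm (qp r)⁻¹]

theorem qbin_self (n : ℕ) : qbin n n = 1 := by
  rw [qbin, if_pos le_rfl, Nat.sub_self, qp_zero, mul_one, qp_mul_inv]

theorem qbin_zero (n : ℕ) : qbin n 0 = 1 := by
  rw [qbin, if_pos n.zero_le, Nat.sub_zero, qp_zero, one_mul, qp_mul_inv]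

theorem qbin_succ_succ (a d : ℕ) :
    qbin (a + 1) (d + 1) = q ^ (d + 1) * qbin a (d + 1) + qbin a d := by
  rcases lt_trichotomy a d with h | rfl | h
  · rw [qbin_of_lt (by omega), qbin_of_lt (by omega), qbin_of_lt h, mul_zero, add_zero]
  · rw [qbin_self, qbin_of_lt (lt_add_one a), qbin_self, mul_zero, zero_add]
  · obtain ⟨r, rfl⟩ := Nat.exists_eq_add_of_lt h
    have e1 : d + r + 1 + 1 = (d + 1) + (r + 1) := by omega
    have e2 : d + r + 1 = (d + 1) + r := by omega
    have e3 : d + r + 1 = d + (r + 1) := by omega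
    rw [e1, qbin_add_left, e2, qbin_add_left, ← e2, e3, qbin_add_left, ← e3,
      show d + 1 + (r + 1) = d + r + 1 + 1 by omega, qp_succ, qp_inv_eq_qp_succ_inv_mul d,
      qp_inv_eq_qp_succ_inv_mul r]
    ring

end GaussianBinomial

section FiniteDurfee

noncomputable def finiteDurfee (a k : ℕ) : PowerSeries ℚ :=
  ∑ d ∈ range (a + 1), q ^ (d * (d + k)) * (qbin a d * (qp (d + k))⁻¹)

theorem finiteDurfee_succ (a k : ℕ) : finiteDurfee (a + 1) k = finiteDurfee a (k + 1) := by
  set g : ℕ → PowerSeries ℚ := fun d => q ^ (d * (d + k) + d) * (qbin a d * (qp (d + k))⁻¹)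
  set h : ℕ → PowerSeries ℚ :=
    fun d => q ^ ((d + 1) * (d + 1 + k)) * (qbin a d * (qp (d + 1 + k))⁻¹)
  have hpascal : ∀ e, q ^ ((e + 1) * (e + 1 + k)) * (qbin (a + 1) (e + 1) * (qp (e + 1 + k))⁻¹)
      = g (e + 1) + h e := fun e => by
    simp only [g, h, qbin_succ_succ, pow_add]; ring
  have hg : ∑ e ∈ range (a + 1), g (e + 1) + g 0 = ∑ d ∈ range (a + 1), g d := by
    rw [← sum_range_succ' g, sum_range_succ, add_eq_left]
    simp [g, qbin_of_lt (lt_add_one a)]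
  have hg0 : g 0 = q ^ (0 * (0 + k)) * (qbin (a + 1) 0 * (qp (0 + k))⁻¹) := by
    simp [g, qbin_zero]
  have hmerge : ∀ d, g d + h d = q ^ (d * (d + (k + 1))) * (qbin a d * (qp (d + (k + 1)))⁻¹) :=
    fun d => by
      simp only [g, h, show d + 1 + k = d + k + 1 by omega, ← add_assoc,
        qp_inv_eq_qp_succ_inv_mul (d + k)]
      ring
  rw [finiteDurfee, finiteDurfee, sum_range_succ', sum_congr rfl fun e _ => hpascal e,
    sum_add_distrib, ← hg0, add_right_comm, hg, ← sum_add_distrib]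
  exact sum_congr rfl fun d _ => hmerge d

theorem finiteDurfee_eq (a k : ℕ) : finiteDurfee a k = (qp (a + k))⁻¹ := by
  induction a generalizing k with
  | zero => simp [finiteDurfee, qbin_zero]
  | succ a ih => rw [finiteDurfee_succ, ih, add_right_comm, add_assoc]

end FiniteDurfee

section SeriesSum

def OrderGeIndex (f : ℕ → PowerSeries ℚ) : Prop := ∀ d, q ^ d ∣ f d

theorem orderGeIndex_X_pow_mul {e : ℕ → ℕ} (g : ℕ → PowerSeries ℚ) (he : ∀ d, d ≤ e d) :
    OrderGeIndex fun d => q ^ e d * g d :=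
  fun d => (pow_dvd_pow q (he d)).mul_right _

theorem OrderGeIndex.mul_left {f : ℕ → PowerSeries ℚ} (hf : OrderGeIndex f) (C : PowerSeries ℚ) :
    OrderGeIndex fun d => C * f d :=
  fun d => (hf d).mul_left C

theorem coeff_seriesSum (f : ℕ → PowerSeries ℚ) (n : ℕ) :
    coeff n (seriesSum f) = coeff n (∑ d ∈ range (n + 1), f d) :=
  coeff_mk _ _

theorem coeff_seriesSum_of_lt {f : ℕ → PowerSeries ℚ} (hf : OrderGeIndex f) {n K : ℕ}
    (h : n < K) : coeff n (seriesSum f) = coeff n (∑ d ∈ range K, f d) := by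
  rw [coeff_seriesSum, map_sum, map_sum]
  refine sum_subset (range_subset_range.mpr h) fun d _ hd => ?_
  exact X_pow_dvd_iff.mp (hf d) n (by simpa using hd)

theorem X_pow_dvd_seriesSum {f : ℕ → PowerSeries ℚ} {N : ℕ} (h : ∀ d, q ^ N ∣ f d) :
    q ^ N ∣ seriesSum f := by
  rw [X_pow_dvd_iff]
  intro n hn
  rw [coeff_seriesSum, map_sum]
  exact sum_eq_zero fun d _ => X_pow_dvd_iff.mp (h d) n hn

theorem seriesSum_add (f g : ℕ → PowerSeries ℚ) :
    seriesSum (fun d => f d + g d) = seriesSum f + seriesSum g := by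
  ext n
  simp only [map_add, coeff_seriesSum, sum_add_distrib]

theorem seriesSum_sub (f g : ℕ → PowerSeries ℚ) :
    seriesSum (fun d => f d - g d) = seriesSum f - seriesSum g := by
  ext n
  simp only [map_sub, coeff_seriesSum, sum_sub_distrib]

theorem seriesSum_neg (f : ℕ → PowerSeries ℚ) : seriesSum (fun d => -f d) = -seriesSum f := by
  ext n
  simp only [map_neg, coeff_seriesSum, sum_neg_distrib]

theorem mul_seriesSum {f : ℕ → PowerSeries ℚ} (hf : OrderGeIndex f) (C : PowerSeries ℚ) :
    C * seriesSum f = seriesSum fun d => C * f d := by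
  ext n
  have htrunc : q ^ (n + 1) ∣ seriesSum f - ∑ d ∈ range (n + 1), f d := by
    rw [X_pow_dvd_iff]
    intro j hj
    rw [map_sub, coeff_seriesSum_of_lt hf hj, sub_self]
  replace htrunc := htrunc.mul_left C
  rw [mul_sub] at htrunc
  rw [coeff_eq_of_X_pow_dvd_sub htrunc (lt_add_one n), coeff_seriesSum, mul_sum]

theorem seriesSum_eq_sum_add_seriesSum_shift {f : ℕ → PowerSeries ℚ} (hf : OrderGeIndex f)
    (j : ℕ) : seriesSum f = ∑ d ∈ range j, f d + seriesSum fun d => f (d + j) := by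
  ext n
  rw [coeff_seriesSum_of_lt hf (show n < j + (n + 1) by omega), sum_range_add, map_add,
    map_add, coeff_seriesSum]
  simp only [add_comm j]

end SeriesSum

section Durfee

noncomputable def durfeeTerm (k d : ℕ) : PowerSeries ℚ :=
  q ^ (d * (d + k)) * ((qp d)⁻¹ * (qp (d + k))⁻¹)

theorem self_le_mul_add (d k : ℕ) : d ≤ d * (d + k) :=
  (Nat.le_mul_self d).trans (Nat.mul_le_mul_left d (Nat.le_add_right d k))

theorem orderGeIndex_durfeeTerm (k : ℕ) : OrderGeIndex (durfeeTerm k) :=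
  orderGeIndex_X_pow_mul _ fun d => self_le_mul_add d k

theorem X_pow_dvd_qbin_sub_qp_inv (d r : ℕ) : q ^ (r + 1) ∣ qbin (d + r) d - (qp d)⁻¹ := by
  have h : qbin (d + r) d - (qp d)⁻¹
      = (qp d)⁻¹ * ((qp r)⁻¹ * qp r * ∏ i ∈ range d, (1 - q ^ (r + i + 1)) - 1) := by
    rw [qbin_add_left, add_comm, qp_add]; ring
  rw [h, qp_inv_mul, one_mul]
  exact (X_pow_dvd_prod_one_sub_X_pow_sub_one r d).mul_left _

theorem seriesSum_durfeeTerm (k : ℕ) : seriesSum (durfeeTerm k) = qpInf⁻¹ := by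
  ext n
  -- modulo `q^(n+1)`, both sides agree with `finiteDurfee n k`, termwise on the left
  have hdvd : q ^ (n + 1) ∣ ∑ d ∈ range (n + 1), durfeeTerm k d - finiteDurfee n k := by
    rw [finiteDurfee, ← sum_sub_distrib]
    refine dvd_sum fun d hd => ?_
    obtain ⟨r, rfl⟩ := Nat.exists_eq_add_of_le (Nat.lt_succ_iff.mp (mem_range.mp hd))
    have hterm : durfeeTerm k d - q ^ (d * (d + k)) * (qbin (d + r) d * (qp (d + k))⁻¹)
        = -(q ^ (d * (d + k)) * ((qbin (d + r) d - (qp d)⁻¹) * (qp (d + k))⁻¹)) := by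
      rw [durfeeTerm]; ring
    rw [hterm, dvd_neg, show d + r + 1 = d + (r + 1) by omega, pow_add]
    exact mul_dvd_mul (pow_dvd_pow q (self_le_mul_add d k))
      ((X_pow_dvd_qbin_sub_qp_inv d r).mul_right _)
  rw [coeff_seriesSum, coeff_eq_of_X_pow_dvd_sub hdvd (lt_add_one n), finiteDurfee_eq,
    coeff_eq_of_X_pow_dvd_sub (X_pow_dvd_qpInf_inv_sub_qp_inv (n + k)) (by omega : n < n + k + 1)]

end Durfee

section Pentagonal

def pent : ℕ → ℕ
  | 0 => 0
  | l + 1 => pent l + 3 * l + 1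

theorem pent_succ (l : ℕ) : pent (l + 1) = pent l + 3 * l + 1 := rfl

theorem two_mul_pent_add (l : ℕ) : 2 * pent l + l = 3 * (l * l) := by
  induction l with
  | zero => rfl
  | succ l ih => rw [pent_succ]; linarith

theorem pent_eq_div (l : ℕ) : l * (3 * l - 1) / 2 = pent l := by
  have h := two_mul_pent_add l
  have h3 : l * (3 * l - 1) = l * (3 * l) - l := Nat.mul_sub_one l (3 * l)
  have h4 : l * (3 * l) = 3 * (l * l) := by ring
  omega

theorem self_le_pent (l : ℕ) : l ≤ pent l := by
  induction l with
  | zero => rfl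
  | succ l ih => rw [pent_succ]; omega

theorem pent_mono : Monotone pent :=
  monotone_nat_of_le_succ fun l => by rw [pent_succ]; omega

end Pentagonal

section PentagonalTail

noncomputable def pentTailTerm (m i : ℕ) : PowerSeries ℚ :=
  (-1) ^ i * (q ^ pent (m + i) + q ^ (pent (m + i) + (m + i)))

/-- `pentTail m = Σ_{j ≥ m} (-1)^(j-m) (q^(j(3j-1)/2) + q^(j(3j+1)/2))`, a tail of Euler's
pentagonal series. -/
noncomputable def pentTail (m : ℕ) : PowerSeries ℚ := seriesSum (pentTailTerm m)

theorem X_pow_pent_dvd_pentTailTerm {m n : ℕ} (i : ℕ) (h : n ≤ m + i) :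
    q ^ pent n ∣ pentTailTerm m i :=
  (dvd_add (pow_dvd_pow q (pent_mono h)) (pow_dvd_pow q (pent_mono h |>.trans
    (Nat.le_add_right _ _)))).mul_left _

theorem orderGeIndex_pentTailTerm (m : ℕ) : OrderGeIndex (pentTailTerm m) :=
  fun i => (pow_dvd_pow q ((Nat.le_add_left i m).trans (self_le_pent _))).trans
    (X_pow_pent_dvd_pentTailTerm i le_rfl)

theorem X_pow_pent_dvd_pentTail (m : ℕ) : q ^ pent m ∣ pentTail m :=
  X_pow_dvd_seriesSum fun i => X_pow_pent_dvd_pentTailTerm i (Nat.le_add_right m i)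

theorem pentTail_add_pentTail_succ (m : ℕ) :
    pentTail m + pentTail (m + 1) = q ^ pent m + q ^ (pent m + m) := by
  have hshift : (fun i => pentTailTerm m (i + 1)) = fun i => -pentTailTerm (m + 1) i := by
    ext1 i
    rw [pentTailTerm, pentTailTerm, show m + (i + 1) = m + 1 + i by omega, pow_succ]
    ring
  rw [pentTail, seriesSum_eq_sum_add_seriesSum_shift (orderGeIndex_pentTailTerm m) 1, hshift,
    seriesSum_neg, pentTail, sum_range_one, pentTailTerm]
  simp

end PentagonalTail

section CrossIdentity

/-- The summand of `X_m = Σ_f q^(f(f+2m)) / ((1 - q^(f+m)) (q)_f (q)_(f+2m-1))` for `m = b + 1`;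
indexing by `b` avoids truncated subtraction. -/
noncomputable def xTerm (b f : ℕ) : PowerSeries ℚ :=
  q ^ (f * (f + 2 * b + 2)) * ((1 - q ^ (f + b + 1))⁻¹ * ((qp f)⁻¹ * (qp (f + 2 * b + 1))⁻¹))

theorem orderGeIndex_xTerm (b : ℕ) : OrderGeIndex (xTerm b) :=
  orderGeIndex_X_pow_mul _ fun f => by simpa [add_assoc] using self_le_mul_add f (2 * b + 2)

theorem xTerm_zero (b : ℕ) : xTerm b 0 = (1 + q ^ (b + 1)) * durfeeTerm (2 * b + 2) 0 := by
  simp only [xTerm, durfeeTerm, zero_add, zero_mul, pow_zero, one_mul, qp_zero, inv_one]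
  rw [show (qp (2 * b + 2))⁻¹ = (qp (2 * b + 1))⁻¹ * (1 - q ^ (2 * b + 2))⁻¹ from qp_inv_succ _]
  linear_combination (qp (2 * b + 1))⁻¹ *
    ((1 + q ^ (b + 1)) * (1 - q ^ (2 * b + 2))⁻¹ * one_sub_X_pow_mul_inv (j := b + 1) (by omega)
      - (1 - q ^ (b + 1))⁻¹ * one_sub_X_pow_mul_inv (j := 2 * b + 2) (by omega))

theorem xTerm_succ_add (b f : ℕ) :
    xTerm b (f + 1) + q ^ (3 * b + 4) * xTerm (b + 1) f
      = (1 + q ^ (b + 1)) * durfeeTerm (2 * b + 2) (f + 1) := by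
  simp only [xTerm, durfeeTerm, show f + 1 + b + 1 = f + b + 2 by omega,
    show f + (b + 1) + 1 = f + b + 2 by omega, show f + 1 + 2 * b + 1 = f + 2 * b + 2 by omega,
    show f + 2 * (b + 1) + 1 = f + 2 * b + 3 by omega,
    show f + 1 + (2 * b + 2) = f + 2 * b + 3 by omega]
  rw [qp_inv_eq_qp_succ_inv_mul f, show (qp (f + 2 * b + 2))⁻¹
    = (qp (f + 2 * b + 3))⁻¹ * (1 - q ^ (f + 2 * b + 3)) from qp_inv_eq_qp_succ_inv_mul _]
  linear_combination q ^ ((f + 1) * (f + 2 * b + 3)) * (1 + q ^ (b + 1)) *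
    ((qp (f + 1))⁻¹ * (qp (f + 2 * b + 3))⁻¹) * one_sub_X_pow_mul_inv (j := f + b + 2) (by omega)

theorem seriesSum_xTerm_add (b : ℕ) :
    seriesSum (xTerm b) + q ^ (3 * b + 4) * seriesSum (xTerm (b + 1))
      = (1 + q ^ (b + 1)) * qpInf⁻¹ := by
  have hu := (orderGeIndex_durfeeTerm (2 * b + 2)).mul_left (1 + q ^ (b + 1))
  calc seriesSum (xTerm b) + q ^ (3 * b + 4) * seriesSum (xTerm (b + 1))
      = xTerm b 0 + seriesSum fun f => xTerm b (f + 1) + q ^ (3 * b + 4) * xTerm (b + 1) f := by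
        rw [seriesSum_eq_sum_add_seriesSum_shift (orderGeIndex_xTerm b) 1,
          mul_seriesSum (orderGeIndex_xTerm (b + 1)), sum_range_one, add_assoc, seriesSum_add]
    _ = seriesSum fun f => (1 + q ^ (b + 1)) * durfeeTerm (2 * b + 2) f := by
        simp only [xTerm_succ_add, xTerm_zero, seriesSum_eq_sum_add_seriesSum_shift hu 1,
          sum_range_one]
    _ = (1 + q ^ (b + 1)) * qpInf⁻¹ := by
        rw [← mul_seriesSum (orderGeIndex_durfeeTerm _), seriesSum_durfeeTerm]

end CrossIdentity

section TailEvaluation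

theorem X_pow_pent_mul_seriesSum_xTerm (b : ℕ) :
    q ^ pent (b + 1) * seriesSum (xTerm b) = pentTail (b + 1) * qpInf⁻¹ := by
  refine sub_eq_zero.mp (eq_zero_of_alternating_of_X_pow_dvd
    (D := fun b => q ^ pent (b + 1) * seriesSum (xTerm b) - pentTail (b + 1) * qpInf⁻¹)
    (fun b => ?_) (fun b => ?_) b)
  · have hcross := seriesSum_xTerm_add b
    have htail := pentTail_add_pentTail_succ (b + 1)
    rw [show pent (b + 1 + 1) = pent (b + 1) + (3 * b + 4) by rw [pent_succ]; ring, pow_add]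
    linear_combination q ^ pent (b + 1) * hcross - qpInf⁻¹ * htail
  · exact (pow_dvd_pow q ((Nat.le_succ b).trans (self_le_pent _))).trans
      (dvd_sub (dvd_mul_right _ _) ((X_pow_pent_dvd_pentTail _).mul_right _))

theorem X_mul_seriesSum_xTerm_zero : q * seriesSum (xTerm 0) = qpInf⁻¹ - 1 := by
  have hterm : ∀ f, q * xTerm 0 f = durfeeTerm 0 (f + 1) := fun f => by
    simp only [xTerm, durfeeTerm, mul_zero, add_zero, qp_inv_succ]
    ring
  rw [mul_seriesSum (orderGeIndex_xTerm 0), funext hterm, ← seriesSum_durfeeTerm 0,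
    seriesSum_eq_sum_add_seriesSum_shift (orderGeIndex_durfeeTerm 0) 1, sum_range_one]
  simp [durfeeTerm, qp_zero]

/-- Euler's pentagonal number theorem. -/
theorem pentTail_one : pentTail 1 = 1 - qpInf := by
  have h := X_pow_pent_mul_seriesSum_xTerm 0
  rw [zero_add, show pent 1 = 1 from rfl, pow_one, X_mul_seriesSum_xTerm_zero] at h
  linear_combination -qpInf * h + (1 - pentTail 1) * qpInf_inv_mul

theorem sum_range_pent (b : ℕ) :
    ∑ l ∈ range (b + 1), (-1) ^ l * q ^ pent l * (1 - q ^ (4 * l + 2))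
      = qpInf + (-1) ^ b * (q ^ pent (b + 1) - pentTail (b + 2)) := by
  induction b with
  | zero =>
    have h := pentTail_add_pentTail_succ 1
    rw [pentTail_one] at h
    norm_num [show pent 1 = 1 from rfl, show pent 0 = 0 from rfl] at h ⊢
    linear_combination h
  | succ b ih =>
    have h := pentTail_add_pentTail_succ (b + 2)
    have hpent : pent (b + 2) = pent (b + 1) + (3 * b + 4) := by rw [pent_succ]; ring
    rw [sum_range_succ, ih]
    simp only [show b + 1 + 1 = b + 2 from rfl, show b + 1 + 2 = b + 3 from rfl, hpent] at h ⊢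
    linear_combination (-1) ^ (b + 1) * h

end TailEvaluation

section SumSide

noncomputable def rhsTerm (m d : ℕ) : PowerSeries ℚ :=
  q ^ ((d + 1) ^ 2 + m.choose 2) * (qp (2 * (d + 1)))⁻¹ * (1 - q ^ m) * (1 - q ^ (d + 1))⁻¹
    * qbin (2 * (d + 1)) ((d + 1) + m)

theorem rhsTerm_of_lt {m d : ℕ} (h : d + 1 < m) : rhsTerm m d = 0 := by
  rw [rhsTerm, qbin_of_lt (by omega), mul_zero]

theorem orderGeIndex_rhsTerm (m : ℕ) : OrderGeIndex (rhsTerm m) := fun d => by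
  simp only [rhsTerm, mul_assoc]
  exact (pow_dvd_pow q (by nlinarith)).mul_right _

theorem sq_add_choose_two (b K : ℕ) :
    (K + b + 1) ^ 2 + (b + 1).choose 2 = K * (K + 2 * b + 2) + pent (b + 1) := by
  have hpent := two_mul_pent_add (b + 1)
  have hchoose : (b + 1).choose 2 * 2 = (b + 1) * b := by
    rw [Nat.choose_two_right, Nat.add_sub_cancel, mul_comm (b + 1)]
    exact Nat.div_mul_cancel (Nat.even_mul_succ_self b).two_dvd
  nlinarith

theorem rhsTerm_add (b K : ℕ) :
    rhsTerm (b + 1) (K + b) = q ^ (K * (K + 2 * b + 2) + pent (b + 1)) *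
      ((1 - q ^ (b + 1)) * ((1 - q ^ (K + b + 1))⁻¹ * ((qp K)⁻¹ * (qp (K + 2 * b + 2))⁻¹))) := by
  rw [rhsTerm, show 2 * (K + b + 1) = K + 2 * b + 2 + K by omega,
    show K + b + 1 + (b + 1) = K + 2 * b + 2 by omega, qbin_add_left, sq_add_choose_two]
  linear_combination (q ^ (K * (K + 2 * b + 2) + pent (b + 1)) * ((1 - q ^ (b + 1)) *
    ((1 - q ^ (K + b + 1))⁻¹ * ((qp K)⁻¹ * (qp (K + 2 * b + 2))⁻¹)))) *
      qp_inv_mul (K + 2 * b + 2 + K)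

theorem rhsTerm_self (b : ℕ) :
    rhsTerm (b + 1) b = q ^ pent (b + 1) * durfeeTerm (2 * b + 2) 0 := by
  have h := rhsTerm_add b 0
  simp only [zero_add, zero_mul] at h
  rw [h, durfeeTerm, ← mul_assoc (1 - _), one_sub_X_pow_mul_inv (by omega), qp_zero]
  simp

theorem rhsTerm_succ_add (b f : ℕ) :
    rhsTerm (b + 1) (f + (b + 1)) = q ^ pent (b + 1) * durfeeTerm (2 * b + 2) (f + 1)
      - q ^ pent (b + 2) * xTerm (b + 1) f := by
  rw [show f + (b + 1) = f + 1 + b by omega, rhsTerm_add, durfeeTerm, xTerm,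
    qp_inv_eq_qp_succ_inv_mul f, pent_succ (b + 1),
    show f + 2 * (b + 1) + 1 = f + 1 + 2 * b + 2 by omega,
    show f + (b + 1) + 1 = f + 1 + b + 1 by omega,
    show f + 1 + (2 * b + 2) = f + 1 + 2 * b + 2 by omega]
  linear_combination q ^ ((f + 1) * (f + 1 + 2 * b + 2) + pent (b + 1)) *
    ((qp (f + 1))⁻¹ * (qp (f + 1 + 2 * b + 2))⁻¹) *
      one_sub_X_pow_mul_inv (j := f + 1 + b + 1) (by omega)

theorem seriesSum_rhsTerm (b : ℕ) :
    seriesSum (rhsTerm (b + 1)) = (q ^ pent (b + 1) - pentTail (b + 2)) * qpInf⁻¹ := by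
  have hu := (orderGeIndex_durfeeTerm (2 * b + 2)).mul_left (q ^ pent (b + 1))
  have hhead : ∑ d ∈ range (b + 1), rhsTerm (b + 1) d
      = q ^ pent (b + 1) * durfeeTerm (2 * b + 2) 0 := by
    rw [sum_range_succ, sum_eq_zero fun d hd => rhsTerm_of_lt (by simp at hd; omega), zero_add,
      rhsTerm_self]
  rw [seriesSum_eq_sum_add_seriesSum_shift (orderGeIndex_rhsTerm _) (b + 1), hhead]
  simp only [rhsTerm_succ_add]
  rw [seriesSum_sub, ← mul_seriesSum (orderGeIndex_xTerm _), X_pow_pent_mul_seriesSum_xTerm,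
    ← add_sub_assoc, ← sum_range_one (fun d => q ^ pent (b + 1) * durfeeTerm (2 * b + 2) d),
    ← seriesSum_eq_sum_add_seriesSum_shift hu 1, ← mul_seriesSum (orderGeIndex_durfeeTerm _),
    seriesSum_durfeeTerm]
  ring

end SumSide

/-- For `m ≥ 1`:
`(1/(q;q)_∞) Σ_{l=0}^{m-1} (-1)^l q^{l(3l-1)/2}(1-q^{4l+2})
  = 1 + (-1)^{m-1} Σ_{d=1}^∞ q^{d²+C(m,2)}/(q;q)_{2d} · (1-q^m)/(1-q^d) · qbinom(2d,d+m)`. -/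
theorem stmt_10 (m : ℕ) (hm : 1 ≤ m) :
    qpInf⁻¹ * ∑ l ∈ Finset.range m,
        (-1 : PowerSeries ℚ) ^ l * PowerSeries.X ^ (l * (3 * l - 1) / 2)
          * (1 - PowerSeries.X ^ (4 * l + 2))
      = 1 + (-1 : PowerSeries ℚ) ^ (m - 1) *
          seriesSum (fun d =>
            PowerSeries.X ^ ((d + 1) ^ 2 + m.choose 2) * (qp (2 * (d + 1)))⁻¹
              * (1 - PowerSeries.X ^ m) * (1 - PowerSeries.X ^ (d + 1))⁻¹
              * qbin (2 * (d + 1)) ((d + 1) + m)) := by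
  obtain ⟨b, rfl⟩ := Nat.exists_eq_add_of_le' hm
  simp only [pent_eq_div]
  rw [sum_range_pent, Nat.add_sub_cancel]
  change _ = 1 + _ * seriesSum (rhsTerm (b + 1))
  rw [seriesSum_rhsTerm]
  linear_combination qpInf_inv_mul
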